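/- If σ(w,t) is the Möbius function of the Tamari order, then for trees t₁, t₂: M_{t₁ ⋋ t₂} = M_{t₁} ⋋ M_{t₂}, where M_t = Σ_{w ≤_T t} μ(w,t)·w and ⋋ is extended bilinearly. More generally, if t = t₁ ⋋ ⋯ ⋋ t_r with each tᵢ ⋋-irreducible, then M_t = M_{t₁} ⋋ ⋯ ⋋ M_{t_r}. -/

import Mathlib

open Classical

/-- Planar binary rooted trees. `leaf` is the unique tree `|` with one leaf. -/
inductive PBT : Type
  | leaf : PBT
  | node : PBT → PBT → PBT
  deriving DecidableEq

/-- Number of leaves of a planar binary rooted tree. -/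
def leavesCount : PBT → ℕ
  | .leaf => 1
  | .node l r => leavesCount l + leavesCount r

/-- Graft the tree `w` onto the leftmost (first) leaf of `t`. -/
def graft1 : PBT → PBT → PBT
  | .leaf, w => w
  | .node l r, w => .node (graft1 l w) r

/-- The product `t ⋋ w := w ∘₁ (t ∨ |)`. -/
def lprod (t w : PBT) : PBT := graft1 w (.node t .leaf)

/-- A tree is `⋋`-irreducible if it is not a product of two (nonempty) trees. -/
def Irr (t : PBT) : Prop := ¬ ∃ u w : PBT, t = lprod u w

/-- One covering move of the Tamari order: a right rotation
`(a ∨ b) ∨ c ↦ a ∨ (b ∨ c)` applied at some internal node. -/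
inductive TStep : PBT → PBT → Prop
  | rot (a b c : PBT) : TStep (.node (.node a b) c) (.node a (.node b c))
  | left {a a' : PBT} (c : PBT) : TStep a a' → TStep (.node a c) (.node a' c)
  | right (a : PBT) {c c' : PBT} : TStep c c' → TStep (.node a c) (.node a c')

/-- The Tamari order on planar binary rooted trees: the reflexive transitive
closure of the rotation moves. -/
def tle : PBT → PBT → Prop := Relation.ReflTransGen TStep

/-- The bilinear extension of `⋋` to the free module on trees. -/
noncomputable def lprodF (f g : PBT →₀ ℤ) : PBT →₀ ℤ :=
  f.sum fun t a => g.sum fun w b => (a * b) • Finsupp.single (lprod t w) 1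

/-!
Every tree below `t₁ ⋋ t₂` in the Tamari order is uniquely of the form `u ⋋ v` with `u ≤ t₁`
and `v ≤ t₂`, and `u ⋋ v ≤ u' ⋋ v'` iff `u ≤ u'` and `v ≤ v'` (when `u`, `u'` have equally many
leaves). So `[u ⋋ v, t₁ ⋋ t₂] ≅ [u, t₁] × [v, t₂]`, and the Möbius function, being determined by
the intervals, is multiplicative: `μ (u ⋋ v) (t₁ ⋋ t₂) = μ u t₁ * μ v t₂`. Expanding `M_{t₁} ⋋ M_{t₂}`
bilinearly then gives exactly the sum defining `M_{t₁ ⋋ t₂}`; the statement about iterated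
products follows by folding.
-/

@[simp] lemma lprod_leaf (u : PBT) : lprod u .leaf = .node u .leaf := rfl

@[simp] lemma lprod_node (u a c : PBT) : lprod u (.node a c) = .node (lprod u a) c := rfl

def PBT.toBinaryTree : PBT → BinaryTree Unit
  | .leaf => .nil
  | .node l r => .node () l.toBinaryTree r.toBinaryTree

lemma PBT.toBinaryTree_injective : Function.Injective PBT.toBinaryTree := by
  intro s t h
  induction s generalizing t with
  | leaf => cases t <;> simp_all [toBinaryTree]
  | node l r ihl ihr =>
    cases t with
    | leaf => simp [toBinaryTree] at h
    | node l' r' =>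
      simp only [toBinaryTree, BinaryTree.node.injEq, true_and] at h
      rw [ihl h.1, ihr h.2]

lemma PBT.numLeaves_toBinaryTree (t : PBT) : t.toBinaryTree.numLeaves = leavesCount t := by
  induction t <;> simp [toBinaryTree, BinaryTree.numLeaves, leavesCount, *]

lemma leavesCount_pos (t : PBT) : 0 < leavesCount t :=
  t.numLeaves_toBinaryTree ▸ BinaryTree.numLeaves_pos _

lemma finite_setOf_leavesCount_eq (n : ℕ) : {t | leavesCount t = n}.Finite := by
  refine ((BinaryTree.treesOfNumNodesEq (n - 1)).finite_toSet.preimage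
    PBT.toBinaryTree_injective.injOn).subset fun t (ht : leavesCount t = n) => ?_
  have := BinaryTree.numLeaves_eq_numNodes_succ t.toBinaryTree
  rw [PBT.numLeaves_toBinaryTree] at this
  simp only [Set.mem_preimage, Finset.mem_coe, BinaryTree.mem_treesOfNumNodesEq]
  omega

lemma leavesCount_lprod (u v : PBT) : leavesCount (lprod u v) = leavesCount u + leavesCount v := by
  induction v with
  | leaf => rfl
  | node a c iha _ => simp only [lprod_node, leavesCount, iha]; omega

lemma lprod_inj {u v u' v' : PBT} (hl : leavesCount u = leavesCount u')
    (h : lprod u v = lprod u' v') : u = u' ∧ v = v' := by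
  have hv := congrArg leavesCount h
  simp only [leavesCount_lprod, hl, Nat.add_left_cancel_iff] at hv
  induction v generalizing v' with
  | leaf =>
    rcases v' with _ | ⟨a', c'⟩
    · simpa using h
    · have := leavesCount_pos a'
      have := leavesCount_pos c'
      simp only [leavesCount] at hv
      omega
  | node a c ih =>
    rcases v' with _ | ⟨a', c'⟩
    · have := leavesCount_pos a
      have := leavesCount_pos c
      simp only [leavesCount] at hv
      omega
    · obtain ⟨h₁, rfl⟩ := PBT.node.inj h
      simp only [leavesCount, Nat.add_right_cancel_iff] at hv
      obtain ⟨rfl, rfl⟩ := ih h₁ hv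
      exact ⟨rfl, rfl⟩

lemma lprod_injOn (n : ℕ) :
    Set.InjOn (fun p : PBT × PBT => lprod p.1 p.2) {p | leavesCount p.1 = n} :=
  fun _ hp _ hq h => Prod.ext_iff.2 (lprod_inj (hp.trans hq.symm) h)

lemma TStep.leavesCount_eq {a b : PBT} (h : TStep a b) : leavesCount a = leavesCount b := by
  induction h <;> simp only [leavesCount, Nat.add_assoc, *]

lemma leavesCount_eq_of_tle {a b : PBT} (h : tle a b) : leavesCount a = leavesCount b := by
  induction h with
  | refl => rfl
  | tail _ hs ih => exact ih.trans hs.leavesCount_eq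

-- A rotation `(a ∨ b) ∨ c ↦ a ∨ (b ∨ c)` lowers `leftWeight` by `leavesCount a`.
def leftWeight : PBT → ℕ
  | .leaf => 0
  | .node l r => leftWeight l + leftWeight r + leavesCount l

lemma TStep.leftWeight_lt {a b : PBT} (h : TStep a b) : leftWeight b < leftWeight a := by
  induction h with
  | rot a b c =>
    have := leavesCount_pos a
    simp only [leftWeight, leavesCount]
    omega
  | left c h ih => simp only [leftWeight, h.leavesCount_eq]; omega
  | right a h ih => simp only [leftWeight]; omega

lemma leftWeight_le_of_tle {a b : PBT} (h : tle a b) : leftWeight b ≤ leftWeight a := by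
  induction h with
  | refl => rfl
  | tail _ hs ih => exact hs.leftWeight_lt.le.trans ih

lemma leftWeight_lt_of_tle_of_ne {a b : PBT} (h : tle a b) (hne : a ≠ b) :
    leftWeight b < leftWeight a := by
  obtain rfl | ⟨c, hac, hcb⟩ := Relation.ReflTransGen.cases_head h
  · exact (hne rfl).elim
  · exact (leftWeight_le_of_tle hcb).trans_lt hac.leftWeight_lt

lemma tle_antisymm {a b : PBT} (h : tle a b) (h' : tle b a) : a = b := by
  by_contra hne
  exact (leftWeight_lt_of_tle_of_ne h hne).not_ge (leftWeight_le_of_tle h')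

lemma TStep.lprod_left {u u' : PBT} (v : PBT) (h : TStep u u') :
    TStep (lprod u v) (lprod u' v) := by
  induction v with
  | leaf => exact .left _ h
  | node a c ih => exact .left _ ih

lemma TStep.lprod_right (u : PBT) {v v' : PBT} (h : TStep v v') :
    TStep (lprod u v) (lprod u v') := by
  induction h with
  | rot a b c => exact .rot _ _ _
  | left c _ ih => exact .left _ ih
  | right a h _ => exact .right _ h

lemma tle_lprod {u u' v v' : PBT} (hu : tle u u') (hv : tle v v') :
    tle (lprod u v) (lprod u' v') :=
  (hu.lift (lprod · v) fun _ _ h => h.lprod_left v).trans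
    (hv.lift (lprod u') fun _ _ h => h.lprod_right u')

lemma TStep.exists_lprod_of_lprod {w u v : PBT} (h : TStep w (lprod u v)) :
    (∃ u', TStep u' u ∧ w = lprod u' v) ∨ (∃ v', TStep v' v ∧ w = lprod u v') := by
  induction v generalizing w with
  | leaf =>
    cases h with
    | left c h => exact .inl ⟨_, h, rfl⟩
    | right a h => cases h
  | node a c iha _ =>
    cases h with
    | rot a₀ b₀ c₀ => exact .inr ⟨.node (.node a b₀) c₀, .rot a b₀ c₀, rfl⟩
    | left c h =>
      rcases iha h with ⟨u', hu', rfl⟩ | ⟨v', hv', rfl⟩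
      · exact .inl ⟨u', hu', rfl⟩
      · exact .inr ⟨.node v' c, .left c hv', rfl⟩
    | right _ h => exact .inr ⟨.node a _, .right a h, rfl⟩

lemma exists_lprod_of_tle_lprod {w t₁ t₂ : PBT} (h : tle w (lprod t₁ t₂)) :
    ∃ u v, tle u t₁ ∧ tle v t₂ ∧ lprod u v = w := by
  induction h using Relation.ReflTransGen.head_induction_on with
  | refl => exact ⟨t₁, t₂, .refl, .refl, rfl⟩
  | head hs _ ih =>
    obtain ⟨u, v, hu, hv, rfl⟩ := ih
    rcases hs.exists_lprod_of_lprod with ⟨u', hu', rfl⟩ | ⟨v', hv', rfl⟩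
    · exact ⟨u', v, .head hu' hu, hv, rfl⟩
    · exact ⟨u, v', hu, .head hv' hv, rfl⟩

lemma tle_lprod_lprod_iff {u v u' v' : PBT} (hl : leavesCount u = leavesCount u') :
    tle (lprod u v) (lprod u' v') ↔ tle u u' ∧ tle v v' := by
  refine ⟨fun h => ?_, fun h => tle_lprod h.1 h.2⟩
  obtain ⟨a, b, ha, hb, hab⟩ := exists_lprod_of_tle_lprod h
  obtain ⟨rfl, rfl⟩ := lprod_inj (hl.trans (leavesCount_eq_of_tle ha).symm) hab.symm
  exact ⟨ha, hb⟩

noncomputable def tIic (t : PBT) : Finset PBT :=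
  ((finite_setOf_leavesCount_eq (leavesCount t)).subset
    fun _ h => leavesCount_eq_of_tle h : {w | tle w t}.Finite).toFinset

noncomputable def tIcc (w t : PBT) : Finset PBT := (tIic t).filter (tle w)

@[simp] lemma mem_tIic {w t : PBT} : w ∈ tIic t ↔ tle w t := by simp [tIic]

@[simp] lemma mem_tIcc {z w t : PBT} : z ∈ tIcc w t ↔ tle w z ∧ tle z t := by
  simp [tIcc, and_comm]

lemma tIcc_self (t : PBT) : tIcc t t = {t} := by
  ext z
  simp only [mem_tIcc, Finset.mem_singleton]
  exact ⟨fun h => (tle_antisymm h.1 h.2).symm, fun h => h ▸ ⟨.refl, .refl⟩⟩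

lemma tIic_lprod (t₁ t₂ : PBT) :
    tIic (lprod t₁ t₂) = (tIic t₁ ×ˢ tIic t₂).image fun p => lprod p.1 p.2 := by
  ext w
  simp only [mem_tIic, Finset.mem_image, Finset.mem_product, Prod.exists]
  exact ⟨fun h => by simpa [and_assoc] using exists_lprod_of_tle_lprod h,
    fun ⟨u, v, ⟨hu, hv⟩, h⟩ => h ▸ tle_lprod hu hv⟩

lemma tIcc_lprod {u v t₁ t₂ : PBT} (hu : tle u t₁) :
    tIcc (lprod u v) (lprod t₁ t₂) = (tIcc u t₁ ×ˢ tIcc v t₂).image fun p => lprod p.1 p.2 := by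
  rw [tIcc, tIic_lprod, Finset.filter_image]
  congr 1
  ext ⟨a, b⟩
  simp only [Finset.mem_filter, Finset.mem_product, mem_tIic, mem_tIcc]
  refine ⟨fun ⟨⟨ha, hb⟩, h⟩ => ?_, fun ⟨⟨hua, ha⟩, hvb, hb⟩ => ⟨⟨ha, hb⟩, tle_lprod hua hvb⟩⟩
  have hl := (leavesCount_eq_of_tle hu).trans (leavesCount_eq_of_tle ha).symm
  obtain ⟨hua, hvb⟩ := (tle_lprod_lprod_iff hl).1 h
  exact ⟨⟨hua, ha⟩, hvb, hb⟩

lemma injOn_lprod_tIic (t₁ t₂ : PBT) :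
    Set.InjOn (fun p : PBT × PBT => lprod p.1 p.2) ↑(tIic t₁ ×ˢ tIic t₂) :=
  (lprod_injOn (leavesCount t₁)).mono fun _ hp =>
    leavesCount_eq_of_tle (mem_tIic.1 (Finset.mem_product.1 hp).1)

lemma sum_tIcc_eq_ite {μ : PBT → PBT → ℤ} (hμrefl : ∀ t, μ t t = 1)
    (hμsum : ∀ w t : PBT, tle w t → w ≠ t →
      (∑ᶠ z : PBT, if tle w z ∧ tle z t then μ z t else 0) = 0)
    (w t : PBT) (h : tle w t) : ∑ z ∈ tIcc w t, μ z t = if w = t then 1 else 0 := by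
  split_ifs with hwt
  · rw [hwt, tIcc_self, Finset.sum_singleton, hμrefl]
  · rw [← hμsum w t h hwt, finsum_eq_sum_of_support_subset (s := tIcc w t)]
    · exact Finset.sum_congr rfl fun z hz => (if_pos (mem_tIcc.1 hz)).symm
    · intro z hz
      by_contra hz'
      exact hz (if_neg (mt mem_tIcc.2 hz'))

-- Downward induction on `u ⋋ v` (measured by `leftWeight`): over
-- `[u ⋋ v, t₁ ⋋ t₂] ≅ [u, t₁] × [v, t₂]` both sides satisfy the same Möbius recursion.
theorem mobius_lprod {μ : PBT → PBT → ℤ}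
    (hμ : ∀ w t, tle w t → ∑ z ∈ tIcc w t, μ z t = if w = t then 1 else 0)
    {t₁ t₂ u v : PBT} (hu : tle u t₁) (hv : tle v t₂) :
    μ (lprod u v) (lprod t₁ t₂) = μ u t₁ * μ v t₂ := by
  induction hn : leftWeight (lprod u v) using Nat.strong_induction_on generalizing u v with
  | _ n ih =>
    have hl : leavesCount u = leavesCount t₁ := leavesCount_eq_of_tle hu
    set S := tIcc u t₁ ×ˢ tIcc v t₂
    have huv : (u, v) ∈ S :=
      Finset.mem_product.2 ⟨mem_tIcc.2 ⟨.refl, hu⟩, mem_tIcc.2 ⟨.refl, hv⟩⟩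
    have hlhs : ∑ p ∈ S, μ (lprod p.1 p.2) (lprod t₁ t₂) = if u = t₁ ∧ v = t₂ then 1 else 0 := by
      have hinj : Set.InjOn (fun p : PBT × PBT => lprod p.1 p.2) ↑S :=
        (injOn_lprod_tIic t₁ t₂).mono (Finset.coe_subset.2
          (Finset.product_subset_product (Finset.filter_subset _ _) (Finset.filter_subset _ _)))
      have h := hμ _ _ (tle_lprod hu hv)
      rw [tIcc_lprod hu, Finset.sum_image hinj] at h
      rw [h]
      exact if_congr ⟨lprod_inj hl, fun h => h.1 ▸ h.2 ▸ rfl⟩ rfl rfl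
    have hrhs : ∑ p ∈ S, μ p.1 t₁ * μ p.2 t₂ = if u = t₁ ∧ v = t₂ then 1 else 0 := by
      simp only [S, Finset.sum_product, ← Finset.sum_mul_sum]
      rw [hμ _ _ hu, hμ _ _ hv, ite_zero_mul_ite_zero, one_mul]
    have hrest : ∑ p ∈ S.erase (u, v), μ (lprod p.1 p.2) (lprod t₁ t₂) =
        ∑ p ∈ S.erase (u, v), μ p.1 t₁ * μ p.2 t₂ := by
      refine Finset.sum_congr rfl fun ⟨a, b⟩ hp => ?_
      obtain ⟨hne, hab⟩ := Finset.mem_erase.1 hp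
      obtain ⟨⟨hua, hat⟩, hvb, hbt⟩ := And.imp mem_tIcc.1 mem_tIcc.1 (Finset.mem_product.1 hab)
      have hlt : leftWeight (lprod a b) < n := hn ▸ leftWeight_lt_of_tle_of_ne (tle_lprod hua hvb)
        fun h => hne (Prod.ext_iff.2 (lprod_inj (hl.trans (leavesCount_eq_of_tle hat).symm) h)).symm
      exact ih _ hlt hat hbt rfl
    rw [← Finset.add_sum_erase S _ huv] at hlhs hrhs
    linarith

lemma support_subset_tIic {μ : PBT → PBT → ℤ} (hμzero : ∀ w t : PBT, ¬ tle w t → μ w t = 0)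
    {f : PBT →₀ ℤ} {t : PBT} (hf : ∀ w, f w = μ w t) : f.support ⊆ tIic t := fun w hw =>
  mem_tIic.2 (by_contra fun h => Finsupp.mem_support_iff.1 hw (hf w ▸ hμzero w t h))

lemma lprodF_eq_sum {f g : PBT →₀ ℤ} {s s' : Finset PBT} (hf : f.support ⊆ s)
    (hg : g.support ⊆ s') :
    lprodF f g = ∑ a ∈ s, ∑ b ∈ s', Finsupp.single (lprod a b) (f a * g b) := by
  simp only [lprodF, Finsupp.smul_single_one]
  rw [Finsupp.sum_of_support_subset f hf _ (by simp)]
  exact Finset.sum_congr rfl fun a _ =>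
    Finsupp.sum_of_support_subset g hg _ (by simp)

lemma apply_lprod_eq_lprodF {μ : PBT → PBT → ℤ} {M : PBT → (PBT →₀ ℤ)}
    (hM : ∀ t w : PBT, M t w = μ w t) (hμzero : ∀ w t : PBT, ¬ tle w t → μ w t = 0)
    (hμ : ∀ w t, tle w t → ∑ z ∈ tIcc w t, μ z t = if w = t then 1 else 0) (t₁ t₂ : PBT) :
    M (lprod t₁ t₂) = lprodF (M t₁) (M t₂) := by
  have hsupp (t : PBT) : (M t).support ⊆ tIic t := support_subset_tIic hμzero (hM t)
  calc M (lprod t₁ t₂)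
      = ∑ z ∈ tIic (lprod t₁ t₂), Finsupp.single z (M (lprod t₁ t₂) z) :=
        ((M _).sum_of_support_subset (hsupp _) _ (by simp)).symm.trans (M _).sum_single |>.symm
    _ = ∑ p ∈ tIic t₁ ×ˢ tIic t₂, Finsupp.single (lprod p.1 p.2) (M t₁ p.1 * M t₂ p.2) := by
        rw [tIic_lprod, Finset.sum_image (injOn_lprod_tIic t₁ t₂)]
        refine Finset.sum_congr rfl fun p hp => ?_
        obtain ⟨h₁, h₂⟩ := Finset.mem_product.1 hp
        rw [hM, hM, hM, mobius_lprod hμ (mem_tIic.1 h₁) (mem_tIic.1 h₂)]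
    _ = lprodF (M t₁) (M t₂) := by rw [lprodF_eq_sum (hsupp t₁) (hsupp t₂), Finset.sum_product]

/-- `M_{t₁ ⋋ t₂} = M_{t₁} ⋋ M_{t₂}`, and more generally if
`t = t₁ ⋋ ⋯ ⋋ t_r` with each `tᵢ` `⋋`-irreducible then
`M_t = M_{t₁} ⋋ ⋯ ⋋ M_{t_r}`. -/
theorem stmt12
    (μ : PBT → PBT → ℤ) (M : PBT → (PBT →₀ ℤ))
    (hM : ∀ t w : PBT, M t w = μ w t)
    (hμrefl : ∀ t : PBT, μ t t = 1)
    (hμzero : ∀ w t : PBT, ¬ tle w t → μ w t = 0)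
    (hμsum : ∀ w t : PBT, tle w t → w ≠ t →
      (∑ᶠ z : PBT, if tle w z ∧ tle z t then μ z t else 0) = 0)
    :
    (∀ t₁ t₂ : PBT, M (lprod t₁ t₂) = lprodF (M t₁) (M t₂)) ∧
    (∀ (t : PBT) (rest : List PBT), Irr t → (∀ s ∈ rest, Irr s) →
      M (List.foldl lprod t rest) = List.foldl lprodF (M t) (rest.map M)) := by
  have hmul := apply_lprod_eq_lprodF hM hμzero (sum_tIcc_eq_ite hμrefl hμsum)
  refine ⟨hmul, fun t rest _ _ => ?_⟩
  rw [List.foldl_map, List.foldl_hom M fun x y => (hmul x y).symm]
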